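/- arXiv:2506.05013 — 2 statements merged into one kernel-verified Lean document; each statement's English description precedes it below -/
import Mathlib

section
/- Define, for complex order μ, K_μ(y) = (1/2)·∫_{−∞}^{∞} e^{−y·cosh t}·e^{μ t} dt for y > 0. Then for every δ ∈ [0, π/2), every real ν and τ with the defining integral convergent, and every y > 0, |K_{ν+iτ}(y)| ≤ e^{−δ|τ|}·K_ν(y·cos δ). -/
open MeasureTheory

/-- Modified Bessel function of the second kind of complex order `μ`,
via the integral representation `K_μ(y) = (1/2)∫_ℝ e^{-y cosh t + μ t} dt`. -/
noncomputable def Kc (μ : ℂ) (y : ℝ) : ℂ :=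
  (1 / 2 : ℂ) * ∫ t : ℝ, Complex.exp (-(y : ℂ) * (Real.cosh t : ℝ) + μ * (t : ℂ))

/-- The same integral representation for real order, real-valued. -/
noncomputable def Kr (ν : ℝ) (y : ℝ) : ℝ :=
  (1 / 2 : ℝ) * ∫ t : ℝ, Real.exp (-y * Real.cosh t + ν * t)

section Aux

open Real Complex Filter intervalIntegral

private lemma cosh_quad (t : ℝ) : t^2/4 ≤ Real.cosh t := by
  rw [← Real.cosh_abs]
  have h := Real.quadratic_le_exp_of_nonneg (abs_nonneg t)
  have h2 : Real.exp (-|t|) > 0 := Real.exp_pos _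
  rw [Real.cosh_eq]
  have : |t|^2 = t^2 := sq_abs t
  nlinarith [abs_nonneg t]

private lemma exp_cosh_bound (k a : ℝ) (hk : 0 < k) (t : ℝ) :
    Real.exp (-(k * Real.cosh t) + a * t) ≤ Real.exp (2*a^2/k) * Real.exp (-(k/8) * t^2) := by
  rw [← Real.exp_add, Real.exp_le_exp]
  have h1 := cosh_quad t
  have h6 : a * t - (k/8)*t^2 ≤ 2*a^2/k := by
    rw [le_div_iff₀ hk]
    nlinarith [sq_nonneg (k*t - 4*a)]
  nlinarith

private lemma integrable_exp_cosh (b a : ℝ) (hb : 0 < b) :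
    Integrable fun t : ℝ => Real.exp (-(b * Real.cosh t) + a * t) := by
  have hg : Integrable fun t : ℝ => Real.exp (2*a^2/b) * Real.exp (-(b/8) * t^2) :=
    (integrable_exp_neg_mul_sq (by positivity : (0:ℝ) < b/8)).const_mul _
  refine hg.mono' ((Real.continuous_exp.comp (by continuity)).aestronglyMeasurable)
    (Filter.Eventually.of_forall fun t => ?_)
  rw [Real.norm_eq_abs, abs_of_pos (Real.exp_pos _)]
  exact exp_cosh_bound b a hb t

private lemma norm_f (y ν τ x u : ℝ) :
    ‖(Complex.exp (-(y:ℂ) * Complex.cosh ((x:ℂ) + (u:ℂ)*Complex.I)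
      + ((ν:ℂ) + (τ:ℂ)*Complex.I) * ((x:ℂ) + (u:ℂ)*Complex.I)))‖ =
    Real.exp (-(y * (Real.cosh x * Real.cos u)) + (ν*x - τ*u)) := by
  rw [Complex.norm_exp]
  congr 1
  simp [Complex.cosh_add, Complex.cosh_mul_I, Complex.sinh_mul_I,
    Complex.add_re, Complex.mul_re, Complex.mul_im,
    Complex.cos_ofReal_re, Complex.cos_ofReal_im, Complex.sin_ofReal_re, Complex.sin_ofReal_im,
    Complex.cosh_ofReal_re, Complex.cosh_ofReal_im, Complex.sinh_ofReal_re, Complex.sinh_ofReal_im]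

private lemma edge_tendsto (k a m : ℝ) (hk : 0 < k) :
    Filter.Tendsto (fun T : ℝ => Real.exp (-(k * Real.cosh T) + (a*T + m)))
      Filter.atTop (nhds 0) := by
  have hb : Filter.Tendsto (fun T : ℝ => Real.exp (m + 2*a^2/k) * Real.exp (-(k/8) * T^2))
      Filter.atTop (nhds 0) := by
    have h1 : Filter.Tendsto (fun T : ℝ => -(k/8) * T^2) Filter.atTop Filter.atBot :=
      by
      have h0 : Filter.Tendsto (fun T : ℝ => (k/8) * T^2) Filter.atTop Filter.atTop :=
        Filter.Tendsto.const_mul_atTop (by positivity) (tendsto_pow_atTop two_ne_zero)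
      have := tendsto_neg_atTop_atBot.comp h0
      simpa [Function.comp_def, neg_mul] using this
    have := (Real.tendsto_exp_atBot.comp h1).const_mul (Real.exp (m + 2*a^2/k))
    simpa using this
  refine squeeze_zero (fun T => (Real.exp_pos _).le) (fun T => ?_) hb
  have := exp_cosh_bound k a hk T
  calc Real.exp (-(k * Real.cosh T) + (a*T + m))
      = Real.exp m * Real.exp (-(k * Real.cosh T) + a*T) := by
        rw [← Real.exp_add]; ring_nf
    _ ≤ Real.exp m * (Real.exp (2*a^2/k) * Real.exp (-(k/8) * T^2)) :=
        mul_le_mul_of_nonneg_left this (Real.exp_pos _).le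
    _ = Real.exp (m + 2*a^2/k) * Real.exp (-(k/8) * T^2) := by
        rw [Real.exp_add]; ring

private lemma integrable_fc (y ν τ u : ℝ) (hy : 0 < y) (hu : |u| < Real.pi/2) :
    Integrable fun t : ℝ => Complex.exp (-(y:ℂ) * Complex.cosh ((t:ℂ) + (u:ℂ)*Complex.I)
      + ((ν:ℂ) + (τ:ℂ)*Complex.I) * ((t:ℂ) + (u:ℂ)*Complex.I)) := by
  have hcos : 0 < Real.cos u :=
    Real.cos_pos_of_mem_Ioo ⟨by linarith [(abs_lt.1 hu).1], (abs_lt.1 hu).2⟩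
  have hg : Integrable fun t : ℝ =>
      Real.exp (-(τ*u)) * Real.exp (-((y * Real.cos u) * Real.cosh t) + ν * t) :=
    (integrable_exp_cosh _ _ (by positivity)).const_mul _
  have hcont : Continuous fun t : ℝ => Complex.exp (-(y:ℂ) * Complex.cosh ((t:ℂ) + (u:ℂ)*Complex.I)
      + ((ν:ℂ) + (τ:ℂ)*Complex.I) * ((t:ℂ) + (u:ℂ)*Complex.I)) := by
    apply Complex.continuous_exp.comp
    exact ((continuous_const.mul (Complex.continuous_cosh.comp
      (Complex.continuous_ofReal.add continuous_const))).add
      (continuous_const.mul (Complex.continuous_ofReal.add continuous_const)))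
  refine hg.mono' hcont.aestronglyMeasurable (Filter.Eventually.of_forall fun t => ?_)
  rw [norm_f, ← Real.exp_add]
  exact Real.exp_le_exp.mpr (le_of_eq (by ring))

private lemma rect_eq (y ν τ c T : ℝ) :
    (∫ x in (-T)..T, Complex.exp (-(y:ℂ) * Complex.cosh ((x:ℂ) + (c:ℂ)*Complex.I)
        + ((ν:ℂ)+(τ:ℂ)*Complex.I) * ((x:ℂ) + (c:ℂ)*Complex.I))) =
      (∫ x in (-T)..T, Complex.exp (-(y:ℂ) * Complex.cosh (x:ℂ)
        + ((ν:ℂ)+(τ:ℂ)*Complex.I) * (x:ℂ)))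
      + Complex.I • (∫ u in (0:ℝ)..c, Complex.exp (-(y:ℂ) * Complex.cosh ((T:ℂ) + (u:ℂ)*Complex.I)
        + ((ν:ℂ)+(τ:ℂ)*Complex.I) * ((T:ℂ) + (u:ℂ)*Complex.I)))
      - Complex.I • (∫ u in (0:ℝ)..c, Complex.exp (-(y:ℂ) * Complex.cosh (((-T:ℝ):ℂ) + (u:ℂ)*Complex.I)
        + ((ν:ℂ)+(τ:ℂ)*Complex.I) * (((-T:ℝ):ℂ) + (u:ℂ)*Complex.I))) := by
  set μ : ℂ := (ν:ℂ) + (τ:ℂ)*Complex.I with hμ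
  set f : ℂ → ℂ := fun z => Complex.exp (-(y:ℂ) * Complex.cosh z + μ * z) with hf
  have hd : Differentiable ℂ f := by
    apply Complex.differentiable_exp.comp
    exact ((differentiable_const _).mul Complex.differentiable_cosh).add
      ((differentiable_const μ).mul differentiable_id)
  have h := Complex.integral_boundary_rect_eq_zero_of_differentiableOn f ((-T:ℝ):ℂ)
    ((T:ℂ) + (c:ℂ)*Complex.I) (hd.differentiableOn)
  simp only [Complex.add_re, Complex.add_im, Complex.ofReal_re, Complex.ofReal_im,
    Complex.mul_re, Complex.mul_im, Complex.I_re, Complex.I_im, mul_zero, mul_one,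
    zero_mul, sub_zero, add_zero, zero_add, zero_sub, neg_zero] at h
  rw [show ((0:ℝ):ℂ) = 0 by simp] at h
  simp only [hf] at h
  simp only [smul_eq_mul] at h ⊢
  push_cast at h ⊢
  simp only [zero_mul, add_zero] at h
  linear_combination -h

set_option maxHeartbeats 2000000 in
private lemma contour_shift (y ν τ c : ℝ) (hy : 0 < y) (hc : |c| < Real.pi / 2) :
    (∫ t : ℝ, Complex.exp (-(y:ℂ) * Complex.cosh (t:ℂ) + ((ν:ℂ)+(τ:ℂ)*Complex.I) * (t:ℂ)))
    = ∫ t : ℝ, Complex.exp (-(y:ℂ) * Complex.cosh ((t:ℂ) + (c:ℂ)*Complex.I)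
        + ((ν:ℂ)+(τ:ℂ)*Complex.I) * ((t:ℂ) + (c:ℂ)*Complex.I)) := by
  have hcos : 0 < Real.cos c :=
    Real.cos_pos_of_mem_Ioo ⟨by linarith [(abs_lt.1 hc).1], (abs_lt.1 hc).2⟩
  have hi0 : Integrable fun t : ℝ =>
      Complex.exp (-(y:ℂ) * Complex.cosh (t:ℂ) + ((ν:ℂ)+(τ:ℂ)*Complex.I) * (t:ℂ)) := by
    have := integrable_fc y ν τ 0 hy (by simpa using Real.pi_div_two_pos)
    simpa using this
  have hic : Integrable fun t : ℝ =>
      Complex.exp (-(y:ℂ) * Complex.cosh ((t:ℂ) + (c:ℂ)*Complex.I)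
        + ((ν:ℂ)+(τ:ℂ)*Complex.I) * ((t:ℂ) + (c:ℂ)*Complex.I)) := integrable_fc y ν τ c hy hc
  -- edge integral
  set E : ℝ → ℂ := fun s => ∫ u in (0:ℝ)..c,
      Complex.exp (-(y:ℂ) * Complex.cosh ((s:ℂ) + (u:ℂ)*Complex.I)
        + ((ν:ℂ)+(τ:ℂ)*Complex.I) * ((s:ℂ) + (u:ℂ)*Complex.I)) with hE
  have hEbound : ∀ s : ℝ, ‖E s‖ ≤
      (Real.exp (-(y * Real.cos c * Real.cosh s) + (|ν| * |s| + |τ| * |c|))) * |c| := by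
    intro s
    have key : ∀ u ∈ Set.uIoc (0:ℝ) c,
        ‖Complex.exp (-(y:ℂ) * Complex.cosh ((s:ℂ) + (u:ℂ)*Complex.I)
          + ((ν:ℂ)+(τ:ℂ)*Complex.I) * ((s:ℂ) + (u:ℂ)*Complex.I))‖ ≤
        Real.exp (-(y * Real.cos c * Real.cosh s) + (|ν| * |s| + |τ| * |c|)) := by
      intro u hu
      have hu1 : u ≤ |c| := hu.2.trans (max_le (abs_nonneg c) (le_abs_self c))
      have hu2 : -|c| ≤ u :=
        (le_min (neg_nonpos_of_nonneg (abs_nonneg c)) (neg_abs_le c)).trans hu.1.le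
      have huc : |u| ≤ |c| := abs_le.mpr ⟨hu2, hu1⟩
      have hcosu : Real.cos c ≤ Real.cos u := by
        rw [← Real.cos_abs c, ← Real.cos_abs u]
        exact Real.cos_le_cos_of_nonneg_of_le_pi (abs_nonneg u)
          (by linarith [Real.pi_pos, hc]) huc
      rw [norm_f, Real.exp_le_exp]
      have h1 : ν * s ≤ |ν| * |s| := le_trans (le_abs_self _) (le_of_eq (abs_mul ν s))
      have h2 : -(τ * u) ≤ |τ| * |c| := by
        calc -(τ * u) ≤ |τ * u| := neg_le_abs _
          _ = |τ| * |u| := abs_mul τ u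
          _ ≤ |τ| * |c| := mul_le_mul_of_nonneg_left huc (abs_nonneg τ)
      have h3 : -(y * (Real.cosh s * Real.cos u)) ≤ -(y * Real.cos c * Real.cosh s) := by
        nlinarith [Real.cosh_pos s,
          mul_le_mul_of_nonneg_left hcosu (mul_pos hy (Real.cosh_pos s)).le]
      linarith
    have := intervalIntegral.norm_integral_le_of_norm_le_const key
    rw [hE]
    simpa using this
  have hBtend : Filter.Tendsto (fun T : ℝ =>
      (Real.exp (-(y * Real.cos c * Real.cosh T) + (|ν| * T + |τ| * |c|))) * |c|)
      Filter.atTop (nhds 0) := by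
    have := (edge_tendsto (y * Real.cos c) |ν| (|τ| * |c|) (by positivity)).mul_const |c|
    simpa using this
  have hEpos : Filter.Tendsto (fun T : ℝ => E T) Filter.atTop (nhds 0) := by
    refine squeeze_zero_norm' ?_ hBtend
    filter_upwards [Filter.eventually_ge_atTop (0:ℝ)] with T hT
    simpa [_root_.abs_of_nonneg hT] using hEbound T
  have hEneg : Filter.Tendsto (fun T : ℝ => E (-T)) Filter.atTop (nhds 0) := by
    refine squeeze_zero_norm' ?_ hBtend
    filter_upwards [Filter.eventually_ge_atTop (0:ℝ)] with T hT
    have := hEbound (-T)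
    simpa [_root_.abs_of_nonneg hT, Real.cosh_neg] using this
  have h1 : Filter.Tendsto (fun T : ℝ => ∫ x in (-T)..T,
      Complex.exp (-(y:ℂ) * Complex.cosh ((x:ℂ) + (c:ℂ)*Complex.I)
        + ((ν:ℂ)+(τ:ℂ)*Complex.I) * ((x:ℂ) + (c:ℂ)*Complex.I))) Filter.atTop
      (nhds (∫ t : ℝ, Complex.exp (-(y:ℂ) * Complex.cosh ((t:ℂ) + (c:ℂ)*Complex.I)
        + ((ν:ℂ)+(τ:ℂ)*Complex.I) * ((t:ℂ) + (c:ℂ)*Complex.I)))) :=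
    intervalIntegral_tendsto_integral hic tendsto_neg_atTop_atBot tendsto_id
  have h0 : Filter.Tendsto (fun T : ℝ => ∫ x in (-T)..T,
      Complex.exp (-(y:ℂ) * Complex.cosh (x:ℂ) + ((ν:ℂ)+(τ:ℂ)*Complex.I) * (x:ℂ))) Filter.atTop
      (nhds (∫ t : ℝ, Complex.exp (-(y:ℂ) * Complex.cosh (t:ℂ)
        + ((ν:ℂ)+(τ:ℂ)*Complex.I) * (t:ℂ)))) :=
    intervalIntegral_tendsto_integral hi0 tendsto_neg_atTop_atBot tendsto_id
  have h2 : Filter.Tendsto (fun T : ℝ => (∫ x in (-T)..T,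
      Complex.exp (-(y:ℂ) * Complex.cosh (x:ℂ) + ((ν:ℂ)+(τ:ℂ)*Complex.I) * (x:ℂ)))
      + Complex.I • E T - Complex.I • E (-T)) Filter.atTop
      (nhds (∫ t : ℝ, Complex.exp (-(y:ℂ) * Complex.cosh (t:ℂ)
        + ((ν:ℂ)+(τ:ℂ)*Complex.I) * (t:ℂ)))) := by
    have := (h0.add (hEpos.const_smul Complex.I)).sub (hEneg.const_smul Complex.I)
    simpa using this
  have heq : ∀ T : ℝ, (∫ x in (-T)..T,
      Complex.exp (-(y:ℂ) * Complex.cosh ((x:ℂ) + (c:ℂ)*Complex.I)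
        + ((ν:ℂ)+(τ:ℂ)*Complex.I) * ((x:ℂ) + (c:ℂ)*Complex.I))) =
      (∫ x in (-T)..T,
      Complex.exp (-(y:ℂ) * Complex.cosh (x:ℂ) + ((ν:ℂ)+(τ:ℂ)*Complex.I) * (x:ℂ)))
      + Complex.I • E T - Complex.I • E (-T) := by
    intro T
    have := rect_eq y ν τ c T
    simpa [hE] using this
  have h2' := h2.congr (fun T => (heq T).symm)
  exact tendsto_nhds_unique h2' h1

end Aux

theorem stmt_11 (δ ν τ y : ℝ) (hδ0 : 0 ≤ δ) (hδ : δ < Real.pi / 2) (hy : 0 < y) :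
    ‖Kc ((ν : ℂ) + (τ : ℂ) * Complex.I) y‖ ≤
      Real.exp (-δ * |τ|) * Kr ν (y * Real.cos δ) := by
  set c : ℝ := if 0 ≤ τ then δ else -δ with hc
  have habsc : |c| = δ := by
    rw [hc]; split <;> simp [abs_of_nonneg hδ0]
  have hcl : |c| < Real.pi / 2 := by rw [habsc]; exact hδ
  have hcoseq : Real.cos c = Real.cos δ := by
    rw [hc]; split <;> simp [Real.cos_neg]
  have hτc : τ * c = |τ| * δ := by
    rw [hc]; split
    · rename_i h; rw [abs_of_nonneg h]
    · rename_i h; rw [abs_of_neg (lt_of_not_ge h)]; ring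
  have hKc : Kc ((ν : ℂ) + (τ : ℂ) * Complex.I) y = (1/2 : ℂ) *
      ∫ t : ℝ, Complex.exp (-(y:ℂ) * Complex.cosh ((t:ℂ) + (c:ℂ)*Complex.I)
        + ((ν:ℂ)+(τ:ℂ)*Complex.I) * ((t:ℂ) + (c:ℂ)*Complex.I)) := by
    rw [Kc, ← contour_shift y ν τ c hy hcl]
    congr 1
    refine integral_congr_ae (Filter.Eventually.of_forall fun t => ?_)
    beta_reduce
    rw [Complex.ofReal_cosh]
  rw [hKc, norm_mul]
  have habs12 : ‖(1/2 : ℂ)‖ = 1/2 := by simp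
  rw [habs12]
  have hnormint : (∫ t : ℝ, ‖Complex.exp (-(y:ℂ) * Complex.cosh ((t:ℂ) + (c:ℂ)*Complex.I)
        + ((ν:ℂ)+(τ:ℂ)*Complex.I) * ((t:ℂ) + (c:ℂ)*Complex.I))‖) =
      Real.exp (-(τ*c)) * ∫ t : ℝ, Real.exp (-(y * Real.cos δ) * Real.cosh t + ν * t) := by
    rw [← integral_const_mul]
    refine integral_congr_ae (Filter.Eventually.of_forall fun t => ?_)
    beta_reduce
    rw [norm_f, ← Real.exp_add, hcoseq]
    congr 1
    ring
  calc (1/2 : ℝ) * ‖(∫ t : ℝ,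
        Complex.exp (-(y:ℂ) * Complex.cosh ((t:ℂ) + (c:ℂ)*Complex.I)
        + ((ν:ℂ)+(τ:ℂ)*Complex.I) * ((t:ℂ) + (c:ℂ)*Complex.I)))‖
      ≤ (1/2 : ℝ) * ∫ t : ℝ, ‖Complex.exp (-(y:ℂ) * Complex.cosh ((t:ℂ) + (c:ℂ)*Complex.I)
        + ((ν:ℂ)+(τ:ℂ)*Complex.I) * ((t:ℂ) + (c:ℂ)*Complex.I))‖ := by
        refine mul_le_mul_of_nonneg_left ?_ (by norm_num)
        exact norm_integral_le_integral_norm _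
    _ = Real.exp (-δ * |τ|) * Kr ν (y * Real.cos δ) := by
        rw [hnormint, Kr]
        rw [show -(τ*c) = -δ * |τ| by rw [hτc]; ring]
        ring
end

section
/- Let a ∈ ℝ, b ∈ ℝ, and x > 0, with a > 0. Define Ψ(a,b;x) = (1/Γ(a))·∫₀^∞ e^{−xt}·t^{a−1}·(1+t)^{b−a−1} dt. Then Ψ(a,b;·) is twice differentiable on (0,∞) and satisfies Kummer's equation x·u''(x) + (b − x)·u'(x) − a·u(x) = 0. -/
/-!
Differentiating under the integral sign multiplies the integrand by `-t`, so with
`I p x = ∫₀^∞ e^{-xt} t^p (1+t)^{b-a-1} dt` we get `Ψ = I (a-1) / Γ(a)`,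
`Ψ' = -I a / Γ(a)` and `Ψ'' = I (a+1) / Γ(a)`. Kummer's equation then reduces to
`x I (a+1) - (b-x) I a - a I (a-1) = 0`, and the integrand of this combination is
`-d/dt [e^{-xt} t^a (1+t)^{b-a}]`, whose boundary values vanish at `0` (as `a > 0`) and at `∞`.
-/

open MeasureTheory Set Filter Real Asymptotics Topology

noncomputable def tricomiIntegrand (p q x t : ℝ) : ℝ := exp (-x * t) * t ^ p * (1 + t) ^ q

noncomputable def tricomiIntegral (p q x : ℝ) : ℝ := ∫ t in Ioi 0, tricomiIntegrand p q x t

lemma tricomiIntegrand_nonneg (p q x : ℝ) {t : ℝ} (ht : 0 ≤ t) :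
    0 ≤ tricomiIntegrand p q x t := by
  unfold tricomiIntegrand; positivity

lemma antitone_tricomiIntegrand_param (p q : ℝ) {t : ℝ} (ht : 0 ≤ t) :
    Antitone fun x => tricomiIntegrand p q x t := fun x y hxy => by
  dsimp only [tricomiIntegrand]
  gcongr

lemma continuousOn_tricomiIntegrand (p q x : ℝ) :
    ContinuousOn (tricomiIntegrand p q x) (Ioi 0) := by
  unfold tricomiIntegrand
  refine ContinuousOn.mul (ContinuousOn.mul (by fun_prop) ?_) ?_
  · exact continuousOn_id.rpow_const fun t ht => Or.inl (ne_of_gt ht)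
  · exact ContinuousOn.rpow_const (f := fun t => 1 + t) (by fun_prop)
      fun t (ht : 0 < t) => Or.inl (ne_of_gt (by linarith : (0 : ℝ) < 1 + t))

lemma tendsto_tricomiIntegrand_atTop (p q : ℝ) {x : ℝ} (hx : 0 < x) :
    Tendsto (tricomiIntegrand p q x) atTop (𝓝 0) := by
  have hp := tendsto_rpow_mul_exp_neg_mul_atTop_nhds_zero p (x / 2) (half_pos hx)
  have hq := (tendsto_rpow_mul_exp_neg_mul_atTop_nhds_zero q (x / 2) (half_pos hx)).comp
    (tendsto_atTop_add_const_left _ 1 tendsto_id)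
  have : Tendsto (fun t => t ^ p * exp (-(x / 2) * t) *
      ((1 + t) ^ q * exp (-(x / 2) * (1 + t)) * exp (x / 2))) atTop (𝓝 0) := by
    simpa [Function.comp_def] using hp.mul (hq.mul_const (exp (x / 2)))
  refine this.congr fun t => ?_
  have hexp : exp (-(x / 2) * t) * (exp (-(x / 2) * (1 + t)) * exp (x / 2)) = exp (-x * t) := by
    rw [← exp_add, ← exp_add]; ring_nf
  simp only [tricomiIntegrand, ← hexp]
  ring

lemma integrableOn_tricomiIntegrand_Ioc (p q x : ℝ) (hp : -1 < p) :
    IntegrableOn (tricomiIntegrand p q x) (Ioc 0 1) := by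
  have hpow : IntegrableOn (fun t : ℝ => t ^ p) (Ioc 0 1) :=
    (intervalIntegrable_iff_integrableOn_Ioc_of_le zero_le_one).1
      (intervalIntegral.intervalIntegrable_rpow' hp)
  have hcont : ContinuousOn (fun t : ℝ => exp (-x * t) * (1 + t) ^ q) (Icc 0 1) := by
    refine ContinuousOn.mul (by fun_prop) ?_
    exact ContinuousOn.rpow_const (f := fun t => 1 + t) (by fun_prop)
      fun t ht => Or.inl (ne_of_gt (by linarith [ht.1] : (0 : ℝ) < 1 + t))
  refine (hpow.mul_continuousOn_of_subset hcont measurableSet_Ioc isCompact_Icc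
    Ioc_subset_Icc_self).congr_fun (fun t _ => ?_) measurableSet_Ioc
  simp only [tricomiIntegrand]; ring

lemma integrableOn_tricomiIntegrand_Ioi_one (p q : ℝ) {x : ℝ} (hx : 0 < x) :
    IntegrableOn (tricomiIntegrand p q x) (Ioi 1) := by
  refine integrable_of_isBigO_exp_neg (half_pos hx)
    ((continuousOn_tricomiIntegrand p q x).mono fun t (ht : 1 ≤ t) => by simp; linarith) ?_
  have hO := ((tendsto_tricomiIntegrand_atTop p q (half_pos hx)).isBigO_one ℝ).mul
    (isBigO_refl (fun t => exp (-(x / 2) * t)) atTop)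
  simp only [one_mul] at hO
  refine hO.congr_left fun t => ?_
  have hexp : exp (-(x / 2) * t) * exp (-(x / 2) * t) = exp (-x * t) := by
    rw [← exp_add]; ring_nf
  simp only [tricomiIntegrand, ← hexp]
  ring

lemma integrableOn_tricomiIntegrand (p q : ℝ) {x : ℝ} (hx : 0 < x) (hp : -1 < p) :
    IntegrableOn (tricomiIntegrand p q x) (Ioi 0) := by
  rw [← Ioc_union_Ioi_eq_Ioi zero_le_one, integrableOn_union]
  exact ⟨integrableOn_tricomiIntegrand_Ioc p q x hp,
    integrableOn_tricomiIntegrand_Ioi_one p q hx⟩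

lemma hasDerivAt_tricomiIntegrand_param (p q : ℝ) {t : ℝ} (ht : t ≠ 0) (x : ℝ) :
    HasDerivAt (fun y => tricomiIntegrand p q y t) (-tricomiIntegrand (p + 1) q x t) x := by
  have hlin : HasDerivAt (fun y : ℝ => -y * t) (-t) x := by
    simpa using (hasDerivAt_id x).neg.mul_const t
  refine ((hlin.exp.mul_const (t ^ p)).mul_const ((1 + t) ^ q)).congr_deriv ?_
  simp only [tricomiIntegrand, rpow_add_one ht]; ring

theorem hasDerivAt_tricomiIntegral (p q : ℝ) (hp : -1 < p) {x : ℝ} (hx : 0 < x) :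
    HasDerivAt (tricomiIntegral p q) (-tricomiIntegral (p + 1) q x) x := by
  have hmeas : ∀ y, AEStronglyMeasurable (tricomiIntegrand p q y) (volume.restrict (Ioi 0)) :=
    fun y => (continuousOn_tricomiIntegrand p q y).aestronglyMeasurable measurableSet_Ioi
  have hbound : ∀ᵐ t ∂volume.restrict (Ioi 0), ∀ y ∈ Metric.ball x (x / 2),
      ‖-tricomiIntegrand (p + 1) q y t‖ ≤ tricomiIntegrand (p + 1) q (x / 2) t := by
    refine (ae_restrict_iff' measurableSet_Ioi).2 (ae_of_all _ fun t (ht : 0 < t) y hy => ?_)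
    have hy : x / 2 < y := by
      have := (abs_lt.1 (mem_ball_iff_norm.1 hy)).1
      linarith
    rw [norm_neg, norm_of_nonneg (tricomiIntegrand_nonneg _ _ _ ht.le)]
    exact antitone_tricomiIntegrand_param _ _ ht.le hy.le
  have hdiff : ∀ᵐ t ∂volume.restrict (Ioi 0), ∀ y ∈ Metric.ball x (x / 2),
      HasDerivAt (fun y => tricomiIntegrand p q y t) (-tricomiIntegrand (p + 1) q y t) y :=
    (ae_restrict_iff' measurableSet_Ioi).2
      (ae_of_all _ fun t ht y _ => hasDerivAt_tricomiIntegrand_param p q (ne_of_gt ht) y)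
  have h := hasDerivAt_integral_of_dominated_loc_of_deriv_le
    (Metric.ball_mem_nhds x (half_pos hx)) (Eventually.of_forall hmeas)
    (integrableOn_tricomiIntegrand p q hx hp)
    ((continuousOn_tricomiIntegrand (p + 1) q x).aestronglyMeasurable measurableSet_Ioi).neg
    hbound (integrableOn_tricomiIntegrand (p + 1) q (half_pos hx) (by linarith)) hdiff
  rw [integral_neg] at h
  exact h.2

lemma hasDerivAt_tricomiIntegrand (a b x : ℝ) {t : ℝ} (ht : 0 < t) :
    HasDerivAt (tricomiIntegrand a (b - a) x)
      (-(x * tricomiIntegrand (a + 1) (b - a - 1) x t - (b - x) * tricomiIntegrand a (b - a - 1) x t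
        - a * tricomiIntegrand (a - 1) (b - a - 1) x t)) t := by
  have ht1 : (0 : ℝ) < 1 + t := by linarith
  have hd := (((hasDerivAt_id t).const_mul (-x)).exp.mul
    (hasDerivAt_rpow_const (p := a) (Or.inl ht.ne'))).mul
    ((hasDerivAt_rpow_const (p := b - a) (Or.inl ht1.ne')).comp t
      ((hasDerivAt_id t).const_add 1))
  refine hd.congr_deriv ?_
  simp only [tricomiIntegrand, Pi.mul_apply, Function.comp_apply, id, rpow_add_one ht.ne',
    rpow_sub_one ht.ne', rpow_sub_one ht1.ne']
  field_simp
  ring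

theorem tricomiIntegral_recurrence (a b : ℝ) (ha : 0 < a) {x : ℝ} (hx : 0 < x) :
    x * tricomiIntegral (a + 1) (b - a - 1) x - (b - x) * tricomiIntegral a (b - a - 1) x
      - a * tricomiIntegral (a - 1) (b - a - 1) x = 0 := by
  have hint : ∀ p, -1 < p →
      Integrable (tricomiIntegrand p (b - a - 1) x) (volume.restrict (Ioi 0)) :=
    fun p hp => integrableOn_tricomiIntegrand p _ hx hp
  have h2 := (hint (a + 1) (by linarith)).const_mul x
  have h1 := (hint a (by linarith)).const_mul (b - x)
  have h0 := (hint (a - 1) (by linarith)).const_mul a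
  have hcont : ContinuousWithinAt (tricomiIntegrand a (b - a) x) (Ici 0) 0 := by
    refine ContinuousAt.continuousWithinAt (ContinuousAt.mul (ContinuousAt.mul (by fun_prop)
      (continuousAt_rpow_const 0 a (Or.inr ha.le))) ?_)
    exact continuousAt_const.add continuousAt_id |>.rpow_const (Or.inl (by norm_num))
  have hftc := integral_Ioi_of_hasDerivAt_of_tendsto hcont
    (fun t ht => hasDerivAt_tricomiIntegrand a b x ht) ((h2.sub h1).sub h0).neg
    (tendsto_tricomiIntegrand_atTop a (b - a) hx)
  have hsplit : ∫ t in Ioi 0, x * tricomiIntegrand (a + 1) (b - a - 1) x t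
      - (b - x) * tricomiIntegrand a (b - a - 1) x t - a * tricomiIntegrand (a - 1) (b - a - 1) x t
      = x * tricomiIntegral (a + 1) (b - a - 1) x - (b - x) * tricomiIntegral a (b - a - 1) x
        - a * tricomiIntegral (a - 1) (b - a - 1) x := by
    rw [integral_sub _ h0, integral_sub h2 h1, integral_const_mul, integral_const_mul,
      integral_const_mul]
    · rfl
    · exact h2.sub h1
  rw [integral_neg, hsplit] at hftc
  have hzero : tricomiIntegrand a (b - a) x 0 = 0 := by simp [tricomiIntegrand, zero_rpow ha.ne']
  linarith

theorem stmt_14 (a b : ℝ) (ha : 0 < a) :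
    let Ψ : ℝ → ℝ := fun x => (1 / Real.Gamma a) *
      ∫ t in Ioi (0 : ℝ), Real.exp (-x * t) * t ^ (a - 1) * (1 + t) ^ (b - a - 1)
    ∀ x : ℝ, 0 < x →
      DifferentiableAt ℝ Ψ x ∧ DifferentiableAt ℝ (deriv Ψ) x ∧
      x * deriv (deriv Ψ) x + (b - x) * deriv Ψ x - a * Ψ x = 0 := by
  intro Ψ x hx
  set C := 1 / Gamma a
  set q := b - a - 1
  have hΨ : ∀ y, 0 < y → HasDerivAt Ψ (C * -tricomiIntegral a q y) y := fun y hy => by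
    have h := (hasDerivAt_tricomiIntegral (a - 1) q (by linarith) hy).const_mul C
    rwa [sub_add_cancel] at h
  have hΨ' : HasDerivAt (deriv Ψ) (C * -(-tricomiIntegral (a + 1) q x)) x :=
    ((hasDerivAt_tricomiIntegral a q (by linarith) hx).neg.const_mul C).congr_of_eventuallyEq
      (eventually_gt_nhds hx |>.mono fun y hy => (hΨ y hy).deriv)
  refine ⟨(hΨ x hx).differentiableAt, hΨ'.differentiableAt, ?_⟩
  have hΨx : Ψ x = C * tricomiIntegral (a - 1) q x := rfl
  rw [hΨ'.deriv, (hΨ x hx).deriv, hΨx]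
  linear_combination C * tricomiIntegral_recurrence a b ha hx
end
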